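/- Define the qubit map Φ : ℂ^{2×2} → ℂ^{2×2} by Φ(X) := σ_x Xᵀ σ_x, where σ_x = [[0,1],[1,0]]. Then Φ is positive and trace-preserving but not 2-positive, tr(Φ) = 2, and for the standard orthonormal basis G = {e₁, e₂} of ℂ² the transition matrix equals T_G = σ_x, so tr(T_G) = 0. In particular, tr(Φ) > c·tr(T_G) for every real constant c, so the inequality tr(Φ) ≤ d·tr(T_G) of the key lemma fails for positive maps that are not 2-positive, regardless of the prefactor. -/

import Mathlib

open Matrix
open scoped ComplexOrder

/-- A linear map on `d × d` complex matrices is *positive* if it sends positive semidefinite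
matrices to positive semidefinite matrices. -/
def IsPosMap {d : ℕ} (Φ : Matrix (Fin d) (Fin d) ℂ → Matrix (Fin d) (Fin d) ℂ) : Prop :=
  ∀ A : Matrix (Fin d) (Fin d) ℂ, A.PosSemidef → (Φ A).PosSemidef

/-- A map on `d × d` complex matrices is *2-positive* if it sends every positive semidefinite
`2d × 2d` block matrix `[[A, B], [C, D]]` to a positive semidefinite block matrix
`[[Φ A, Φ B], [Φ C, Φ D]]`. -/
def IsTwoPos {d : ℕ} (Φ : Matrix (Fin d) (Fin d) ℂ → Matrix (Fin d) (Fin d) ℂ) : Prop :=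
  ∀ A B C D : Matrix (Fin d) (Fin d) ℂ,
    (Matrix.fromBlocks A B C D).PosSemidef →
    (Matrix.fromBlocks (Φ A) (Φ B) (Φ C) (Φ D)).PosSemidef

/-- A map on matrices is *trace-preserving* if `tr (Φ X) = tr X` for all `X`. -/
def IsTracePreserving {d : ℕ} (Φ : Matrix (Fin d) (Fin d) ℂ → Matrix (Fin d) (Fin d) ℂ) : Prop :=
  ∀ X : Matrix (Fin d) (Fin d) ℂ, (Φ X).trace = X.trace

/-- The transition matrix `T_G` of a map `Φ` with respect to a family `g` of vectors:
`(T_G)_{jk} = ⟨g j, Φ(|g k⟩⟨g k|) (g j)⟩`. -/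
noncomputable def transMat {d : ℕ} (Φ : Matrix (Fin d) (Fin d) ℂ → Matrix (Fin d) (Fin d) ℂ)
    (g : Fin d → (Fin d → ℂ)) : Matrix (Fin d) (Fin d) ℂ :=
  Matrix.of fun j k =>
    star (g j) ⬝ᵥ (Φ (Matrix.vecMulVec (g k) (star (g k)))).mulVec (g j)

/-! Φ is the transpose followed by conjugation with the self-adjoint unitary σₓ, hence positive
and trace-preserving. On matrix units it acts as `Φ (E i j) = E j.rev i.rev`, from which
`tr Φ = 2` (only `E 0 1` and `E 1 0` are fixed) and `T_G = σₓ` are read off. The block matrix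
`[[E 0 0, E 0 1], [E 1 0, E 1 1]] = v vᴴ` is positive semidefinite, but its image under Φ is the
swap operator on `ℂ² ⊗ ℂ²`, which is negative on `e₀ ⊗ e₀ - e₁ ⊗ e₁`; so Φ is not 2-positive. -/

theorem LinearMap.trace_eq_sum_apply_single {R m n : Type*} [CommRing R] [Fintype m] [Fintype n]
    [DecidableEq m] [DecidableEq n] (f : Module.End R (Matrix m n R)) :
    LinearMap.trace R _ f = ∑ i, ∑ j, f (Matrix.single i j 1) i j := by
  rw [LinearMap.trace_eq_matrix_trace R (Matrix.stdBasis R m n) f, Matrix.trace,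
    Fintype.sum_prod_type]
  simp only [diag_apply, LinearMap.toMatrix_apply, stdBasis_eq_single]
  simp [Matrix.stdBasis, Module.Basis.map_repr, Module.Basis.repr_reindex]

theorem transMat_pi_single {d : ℕ} (Φ : Matrix (Fin d) (Fin d) ℂ → Matrix (Fin d) (Fin d) ℂ) :
    transMat Φ (fun i => Pi.single i 1) = of fun j k => Φ (single k k 1) j j := by
  ext j k
  simp [transMat, single_eq_single_vecMulVec_single]

section TransposeConjugation

variable {d : ℕ} (S : Matrix (Fin d) (Fin d) ℂ)

theorem isPosMap_mul_transpose_mul_conjTranspose : IsPosMap fun X => S * Xᵀ * Sᴴ :=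
  fun _ hX => hX.transpose.mul_mul_conjTranspose_same S

theorem isTracePreserving_mul_transpose_mul_conjTranspose (hS : Sᴴ * S = 1) :
    IsTracePreserving fun X => S * Xᵀ * Sᴴ := by
  intro X
  rw [trace_mul_cycle, hS, one_mul, trace_transpose]

end TransposeConjugation

theorem IsTwoPos.posSemidef_fromBlocks_apply_single {d : ℕ}
    {Φ : Matrix (Fin d) (Fin d) ℂ → Matrix (Fin d) (Fin d) ℂ} (hΦ : IsTwoPos Φ) (i j : Fin d) :
    (fromBlocks (Φ (single i i 1)) (Φ (single i j 1)) (Φ (single j i 1))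
      (Φ (single j j 1))).PosSemidef := by
  apply hΦ
  have hblocks : fromBlocks (single i i 1) (single i j 1) (single j i 1) (single j j (1 : ℂ)) =
      vecMulVec (Sum.elim (Pi.single i 1) (Pi.single j 1))
        (star (Sum.elim (Pi.single i 1) (Pi.single j 1))) := by
    ext (a | a) (b | b) <;>
      simp [single_eq_single_vecMulVec_single, vecMulVec_apply, Pi.single_apply]
  rw [hblocks]
  exact posSemidef_vecMulVec_self_star _

local notation "σₓ" => !![(0 : ℂ), 1; 1, 0]

theorem pauliX_conjTranspose : σₓᴴ = σₓ := by
  ext i j; fin_cases i <;> fin_cases j <;> simp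

theorem pauliX_conjTranspose_mul_self : σₓᴴ * σₓ = 1 := by
  rw [pauliX_conjTranspose]; ext i j; fin_cases i <;> fin_cases j <;> simp

theorem pauliX_mul_single_mul (i j : Fin 2) (c : ℂ) :
    σₓ * single i j c * σₓ = single i.rev j.rev c := by
  fin_cases i <;> fin_cases j <;> ext a b <;> fin_cases a <;> fin_cases b <;>
    simp [mul_apply, vecMul, dotProduct, Fin.sum_univ_two]

theorem pauliX_mul_transpose_single_mul (i j : Fin 2) (c : ℂ) :
    σₓ * (single i j c)ᵀ * σₓ = single j.rev i.rev c := by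
  rw [transpose_single, pauliX_mul_single_mul]

theorem not_isTwoPos_pauliX_mul_transpose_mul :
    ¬ IsTwoPos fun X : Matrix (Fin 2) (Fin 2) ℂ => σₓ * Xᵀ * σₓ := by
  intro h
  have hpsd := (h.posSemidef_fromBlocks_apply_single 0 1).dotProduct_mulVec_nonneg
    (Sum.elim (Pi.single 0 1) (Pi.single 1 (-1)))
  simp only [pauliX_mul_transpose_single_mul] at hpsd
  simp [dotProduct, Fin.sum_univ_two, mulVec, fromBlocks, single_apply, Complex.le_def] at hpsd
  norm_num at hpsd

/-- The qubit map Φ(X) = σ_x Xᵀ σ_x is positive and trace-preserving but not 2-positive,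
tr(Φ) = 2, and for the standard basis the transition matrix is σ_x with trace 0, so
tr(Φ) > c·tr(T_G) for every real c. -/
theorem key_lemma_fails_for_merely_positive (σx : Matrix (Fin 2) (Fin 2) ℂ)
    (hσ : σx = !![0, 1; 1, 0])
    (Φ : Module.End ℂ (Matrix (Fin 2) (Fin 2) ℂ))
    (hΦ : ∀ X : Matrix (Fin 2) (Fin 2) ℂ, Φ X = σx * Xᵀ * σx)
    (e : Fin 2 → (Fin 2 → ℂ)) (he : ∀ i, e i = Pi.single i 1) :
    IsPosMap ⇑Φ ∧ IsTracePreserving ⇑Φ ∧ ¬ IsTwoPos ⇑Φ ∧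
    LinearMap.trace ℂ (Matrix (Fin 2) (Fin 2) ℂ) Φ = 2 ∧
    transMat ⇑Φ e = σx ∧
    (transMat ⇑Φ e).trace = 0 ∧
    (∀ c : ℝ, (LinearMap.trace ℂ (Matrix (Fin 2) (Fin 2) ℂ) Φ).re >
      c * (transMat ⇑Φ e).trace.re) := by
  subst hσ
  have hΦ_eq : ⇑Φ = fun X => σₓ * Xᵀ * σₓ := funext hΦ
  have hΦ_conj : ⇑Φ = fun X => σₓ * Xᵀ * σₓᴴ := by rw [hΦ_eq, pauliX_conjTranspose]
  have hΦ_single (i j : Fin 2) : Φ (single i j 1) = single j.rev i.rev 1 := by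
    rw [hΦ, pauliX_mul_transpose_single_mul]
  have htrΦ : LinearMap.trace ℂ _ Φ = 2 := by
    simp [LinearMap.trace_eq_sum_apply_single, hΦ_single, Fin.sum_univ_two, single_apply_of_ne,
      one_add_one_eq_two]
  have htm : transMat ⇑Φ e = σₓ := by
    rw [funext he, transMat_pi_single]
    ext j k
    fin_cases j <;> fin_cases k <;> simp [hΦ_single, single_apply]
  have htrT : (transMat ⇑Φ e).trace = 0 := by simp [htm, trace_fin_two]
  refine ⟨hΦ_conj ▸ isPosMap_mul_transpose_mul_conjTranspose σₓ,
    hΦ_conj ▸ isTracePreserving_mul_transpose_mul_conjTranspose σₓ pauliX_conjTranspose_mul_self,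
    hΦ_eq ▸ not_isTwoPos_pauliX_mul_transpose_mul, htrΦ, htm, htrT,
    fun c => by simp [htrΦ, htrT]⟩
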